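/- arXiv:2501.18267 — 2 statements merged into one kernel-verified Lean document; each statement's English description precedes it below -/
import Mathlib

section
/- The group G(D̃₄^{(1,1)}) defined by the elliptic Dynkin presentation is isomorphic to the group G'(D̃₄^{(1,1)}) defined by the new presentation with infinitely many generators tᵢ (i ∈ ℤ); i.e. there exists a group isomorphism G(D̃₄^{(1,1)}) ≃ G'(D̃₄^{(1,1)}). -/
/-!
STATEMENT 0: The group G(D̃₄^{(1,1)}) defined by the elliptic Dynkin presentation is
isomorphic to the group G'(D̃₄^{(1,1)}) defined by the new presentation with infinitely
many generators tᵢ (i ∈ ℤ).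
-/

namespace EllipticD4

/-- Generators of `G(D̃₄^{(1,1)})`: `Sum.inl i` is `tᵢ` (`i ∈ {0,1}`),
`Sum.inr j` is `sⱼ` (`j ∈ {1,2,3,4}`). -/
abbrev GenG : Type := Fin 2 ⊕ Fin 4

/-- Generators of `G'(D̃₄^{(1,1)})`: `Sum.inl i` is `tᵢ` (`i ∈ ℤ`),
`Sum.inr j` is `sⱼ` (`j ∈ {1,2,3,4}`). -/
abbrev GenG' : Type := ℤ ⊕ Fin 4

def tG (i : Fin 2) : FreeGroup GenG := FreeGroup.of (Sum.inl i)
def sG (j : Fin 4) : FreeGroup GenG := FreeGroup.of (Sum.inr j)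

/-- Relators of the elliptic Dynkin presentation of `G(D̃₄^{(1,1)})`. -/
def relsG : Set (FreeGroup GenG) :=
  { r | (∃ i j, r = (tG i * sG j * tG i)⁻¹ * (sG j * tG i * sG j)) ∨
        (∃ i j, i ≠ j ∧ r = (sG i * sG j)⁻¹ * (sG j * sG i)) ∨
        (∃ i, r = (sG i * tG 1 * tG 0 * sG i * tG 1 * tG 0)⁻¹ *
                  (tG 1 * tG 0 * sG i * tG 1 * tG 0 * sG i)) }

def tG' (i : ℤ) : FreeGroup GenG' := FreeGroup.of (Sum.inl i)
def sG' (j : Fin 4) : FreeGroup GenG' := FreeGroup.of (Sum.inr j)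

/-- Relators of the new presentation of `G'(D̃₄^{(1,1)})`. -/
def relsG' : Set (FreeGroup GenG') :=
  { r | (∃ i j, r = (tG' i * sG' j * tG' i)⁻¹ * (sG' j * tG' i * sG' j)) ∨
        (∃ i j, i ≠ j ∧ r = (sG' i * sG' j)⁻¹ * (sG' j * sG' i)) ∨
        (∃ i j : ℤ, r = (tG' i * tG' (i - 1))⁻¹ * (tG' j * tG' (j - 1))) }

/-!
In `G'` the relations `(R3)` say `tₙ tₙ₋₁ = Δ := t₁ t₀` for all `n`, so every `tₙ` is determined
by `t₀` and `Δ` through `tₙ₊₁ = Δ tₙ⁻¹`. In `G` one defines `tₙ` by the same recursion. The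
braid relations of `tₙ₋₁` and `tₙ` with `s` pass to `tₙ₊₁ = tₙ tₙ₋₁ tₙ⁻¹` and to
`tₙ₋₂ = tₙ₋₁⁻¹ tₙ tₙ₋₁` as soon as `Δ` satisfies `(P3)` with `s`; conversely `(P3)` holds in `G'`
because `t₂ t₁ = t₁ t₀`.
-/

section Braid

variable {G : Type*} [Group G]

theorem inv_mul_mul_eq_of_braid {a s : G} (ha : a * s * a = s * a * s) :
    a⁻¹ * s * a = s * a * s⁻¹ := by
  calc a⁻¹ * s * a = a⁻¹ * (s * a * s) * s⁻¹ := by group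
    _ = s * a * s⁻¹ := by rw [← ha]; group

theorem braid_mul_inv {a d s : G} (ha : a * s * a = s * a * s)
    (hb : a⁻¹ * d * s * (a⁻¹ * d) = s * (a⁻¹ * d) * s)
    (hd : s * d * s * d = d * s * d * s) :
    d * a⁻¹ * s * (d * a⁻¹) = s * (d * a⁻¹) * s := by
  obtain ⟨b, rfl⟩ : ∃ b, d = a * b := ⟨a⁻¹ * d, by group⟩
  rw [inv_mul_cancel_left] at hb
  have hac := inv_mul_mul_eq_of_braid ha
  have hbc : b⁻¹ * s⁻¹ * b = s * b⁻¹ * s⁻¹ := by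
    rw [← inv_inj]; simpa only [mul_inv_rev, inv_inv, mul_assoc] using
      inv_mul_mul_eq_of_braid hb
  calc a * b * a⁻¹ * s * (a * b * a⁻¹)
      = a * b * (a⁻¹ * s * a) * b * a⁻¹ := by group
    _ = a * b * s * a * b * (b⁻¹ * s⁻¹ * b) * a⁻¹ := by rw [hac]; group
    _ = (a * b * s * (a * b) * s) * (b⁻¹ * s⁻¹ * a⁻¹) := by rw [hbc]; group
    _ = s * (a * b) * (s * a * s⁻¹) * a⁻¹ := by rw [← hd]; group
    _ = s * (a * b * a⁻¹) * s := by rw [← hac]; group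

theorem braid_inv_mul {a d s : G} (ha : a * s * a = s * a * s)
    (hc : d * a⁻¹ * s * (d * a⁻¹) = s * (d * a⁻¹) * s)
    (hd : s * d * s * d = d * s * d * s) :
    a⁻¹ * d * s * (a⁻¹ * d) = s * (a⁻¹ * d) * s := by
  open MulOpposite in
  have key := braid_mul_inv (a := op a) (d := op d) (s := op s)
    (by simpa only [op_mul, mul_assoc] using congrArg op ha)
    (by simpa only [op_mul, op_inv, mul_assoc] using congrArg op hc)
    (by simpa only [op_mul, mul_assoc] using congrArg op hd.symm)
  apply op_injective
  simpa only [op_mul, op_inv, mul_assoc] using key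

theorem braid_four_of_braid {x₀ x₁ x₂ s : G} (h₀ : x₀ * s * x₀ = s * x₀ * s)
    (h₁ : x₁ * s * x₁ = s * x₁ * s) (h₂ : x₂ * s * x₂ = s * x₂ * s) (h : x₂ * x₁ = x₁ * x₀) :
    s * (x₁ * x₀) * s * (x₁ * x₀) = x₁ * x₀ * s * (x₁ * x₀) * s := by
  calc s * (x₁ * x₀) * s * (x₁ * x₀)
      = s * (x₂ * x₁) * (s * x₁ * x₀) := by rw [h]; group
    _ = s * x₂ * (s * x₁ * s) * x₀ := by rw [← h₁]; group
    _ = (x₂ * s * x₂) * x₁ * (s * x₀) := by rw [h₂]; group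
    _ = x₂ * s * (x₁ * x₀) * (s * x₀) := by rw [← h]; group
    _ = x₂ * s * x₁ * (s * x₀ * s) := by rw [← h₀]; group
    _ = x₂ * (x₁ * s * x₁) * (x₀ * s) := by rw [h₁]; group
    _ = x₁ * x₀ * s * (x₁ * x₀) * s := by nth_rewrite 1 [← h]; group

theorem braid_of_mul_sub_one_eq {t : ℤ → G} {d s : G} (ht : ∀ n, t n * t (n - 1) = d)
    (hd : s * d * s * d = d * s * d * s) (h₀ : t 0 * s * t 0 = s * t 0 * s)
    (h₁ : t 1 * s * t 1 = s * t 1 * s) (n : ℤ) : t n * s * t n = s * t n * s := by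
  have succ_eq (n : ℤ) : t (n + 1) = d * (t n)⁻¹ :=
    eq_mul_inv_of_mul_eq (by simpa using ht (n + 1))
  have pred_eq (n : ℤ) : t (n - 1) = (t n)⁻¹ * d := eq_inv_mul_of_mul_eq (ht n)
  suffices ∀ n, t n * s * t n = s * t n * s ∧ t (n + 1) * s * t (n + 1) = s * t (n + 1) * s from
    (this n).1
  intro n
  induction n using Int.induction_on with
  | zero => exact ⟨h₀, h₁⟩
  | succ k ih =>
    refine ⟨ih.2, ?_⟩
    rw [succ_eq (k + 1)]
    exact braid_mul_inv ih.2 (by rw [← pred_eq, add_sub_cancel_right]; exact ih.1) hd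
  | pred k ih =>
    refine ⟨?_, by rw [sub_add_cancel]; exact ih.1⟩
    rw [pred_eq]
    exact braid_inv_mul ih.1 (by rw [← succ_eq]; exact ih.2) hd

end Braid

section Chain

variable {G H : Type*} [Group G] [Group H]

/-- The sequence with `t₀ = x` and `tₙ₊₁ = d tₙ⁻¹`, as the orbit of `x` under `y ↦ d y⁻¹`. -/
def chain (d x : G) (n : ℤ) : G := ((Equiv.mulLeft d * Equiv.inv G) ^ n) x

theorem chain_zero (d x : G) : chain d x 0 = x := rfl

theorem chain_one (d x : G) : chain d x 1 = d * x⁻¹ := rfl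

theorem chain_mul_chain_sub_one (d x : G) (n : ℤ) : chain d x n * chain d x (n - 1) = d := by
  obtain ⟨m, rfl⟩ : ∃ m, n = 1 + m := ⟨n - 1, by ring⟩
  simp [chain, zpow_one_add]

theorem eq_of_mul_sub_one_eq {t u : ℤ → G} {d : G} (ht : ∀ n, t n * t (n - 1) = d)
    (hu : ∀ n, u n * u (n - 1) = d) (h₀ : t 0 = u 0) : t = u := by
  funext n
  induction n using Int.induction_on with
  | zero => exact h₀
  | succ k ih =>
    have h := (ht (k + 1)).trans (hu (k + 1)).symm
    rwa [add_sub_cancel_right, ih, mul_left_inj] at h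
  | pred k ih =>
    have h := (ht (-k)).trans (hu (-k)).symm
    rwa [ih, mul_right_inj] at h

theorem map_chain (f : G →* H) (d x : G) (n : ℤ) : f (chain d x n) = chain (f d) (f x) n :=
  congrFun (eq_of_mul_sub_one_eq (t := fun n ↦ f (chain d x n))
    (fun n ↦ by rw [← map_mul, chain_mul_chain_sub_one]) (chain_mul_chain_sub_one _ _)
    (by rw [chain_zero, chain_zero])) n

end Chain

def T (i : Fin 2) : PresentedGroup relsG := .of (.inl i)
def S (j : Fin 4) : PresentedGroup relsG := .of (.inr j)
def T' (i : ℤ) : PresentedGroup relsG' := .of (.inl i)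
def S' (j : Fin 4) : PresentedGroup relsG' := .of (.inr j)

theorem T_braid (i : Fin 2) (j : Fin 4) : T i * S j * T i = S j * T i * S j :=
  PresentedGroup.mk_eq_mk_of_inv_mul_mem (Or.inl ⟨i, j, rfl⟩)

theorem S_comm {i j : Fin 4} (hij : i ≠ j) : S i * S j = S j * S i :=
  PresentedGroup.mk_eq_mk_of_inv_mul_mem (Or.inr (Or.inl ⟨i, j, hij, rfl⟩))

theorem S_braid_four (j : Fin 4) :
    S j * (T 1 * T 0) * S j * (T 1 * T 0) = T 1 * T 0 * S j * (T 1 * T 0) * S j := by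
  have h := PresentedGroup.mk_eq_mk_of_inv_mul_mem (rels := relsG) (Or.inr (Or.inr ⟨j, rfl⟩))
  simp only [map_mul, mul_assoc] at h ⊢
  exact h

theorem T'_braid (i : ℤ) (j : Fin 4) : T' i * S' j * T' i = S' j * T' i * S' j :=
  PresentedGroup.mk_eq_mk_of_inv_mul_mem (Or.inl ⟨i, j, rfl⟩)

theorem S'_comm {i j : Fin 4} (hij : i ≠ j) : S' i * S' j = S' j * S' i :=
  PresentedGroup.mk_eq_mk_of_inv_mul_mem (Or.inr (Or.inl ⟨i, j, hij, rfl⟩))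

theorem T'_mul_sub_one (n : ℤ) : T' n * T' (n - 1) = T' 1 * T' 0 :=
  PresentedGroup.mk_eq_mk_of_inv_mul_mem (Or.inr (Or.inr ⟨n, 1, rfl⟩))

def phi : PresentedGroup relsG →* PresentedGroup relsG' :=
  PresentedGroup.toGroup (rels := relsG) (f := Sum.elim (fun i : Fin 2 ↦ T' i) S') <| by
    rintro r (⟨i, j, rfl⟩ | ⟨i, j, hij, rfl⟩ | ⟨j, rfl⟩) <;>
      simp only [tG, sG, map_mul, map_inv, FreeGroup.lift_apply_of, Sum.elim_inl, Sum.elim_inr,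
        inv_mul_eq_one, Fin.val_zero, Fin.val_one, Nat.cast_zero, Nat.cast_one]
    · exact T'_braid i j
    · exact S'_comm hij
    · have h21 : T' 2 * T' 1 = T' 1 * T' 0 := T'_mul_sub_one 2
      simpa only [mul_assoc] using
        braid_four_of_braid (T'_braid 0 j) (T'_braid 1 j) (T'_braid 2 j) h21

def tau (n : ℤ) : PresentedGroup relsG := chain (T 1 * T 0) (T 0) n

theorem tau_mul_tau_sub_one (n : ℤ) : tau n * tau (n - 1) = T 1 * T 0 :=
  chain_mul_chain_sub_one _ _ n

theorem tau_zero : tau 0 = T 0 := chain_zero _ _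

theorem tau_one : tau 1 = T 1 := (chain_one _ _).trans (mul_inv_cancel_right _ _)

theorem tau_braid (n : ℤ) (j : Fin 4) : tau n * S j * tau n = S j * tau n * S j :=
  braid_of_mul_sub_one_eq tau_mul_tau_sub_one (S_braid_four j) (tau_zero ▸ T_braid 0 j)
    (tau_one ▸ T_braid 1 j) n

def psi : PresentedGroup relsG' →* PresentedGroup relsG :=
  PresentedGroup.toGroup (rels := relsG') (f := Sum.elim tau S) <| by
    rintro r (⟨i, j, rfl⟩ | ⟨i, j, hij, rfl⟩ | ⟨i, j, rfl⟩) <;>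
      simp only [tG', sG', map_mul, map_inv, FreeGroup.lift_apply_of, Sum.elim_inl, Sum.elim_inr,
        inv_mul_eq_one]
    · exact tau_braid i j
    · exact S_comm hij
    · rw [tau_mul_tau_sub_one, tau_mul_tau_sub_one]

theorem phi_T (i : Fin 2) : phi (T i) = T' i := PresentedGroup.toGroup.of _
theorem phi_S (j : Fin 4) : phi (S j) = S' j := PresentedGroup.toGroup.of _
theorem psi_T' (n : ℤ) : psi (T' n) = tau n := PresentedGroup.toGroup.of _
theorem psi_S' (j : Fin 4) : psi (S' j) = S j := PresentedGroup.toGroup.of _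

theorem psi_comp_phi : psi.comp phi = .id _ := by
  refine PresentedGroup.ext fun x ↦ ?_
  rcases x with i | j
  · show psi (phi (T i)) = T i
    rw [phi_T, psi_T']
    fin_cases i
    · exact tau_zero
    · exact tau_one
  · exact (congrArg psi (phi_S j)).trans (psi_S' j)

theorem phi_comp_psi : phi.comp psi = .id _ := by
  refine PresentedGroup.ext fun x ↦ ?_
  rcases x with n | j
  · show phi (psi (T' n)) = T' n
    rw [psi_T', tau, map_chain, map_mul, phi_T, phi_T]
    exact congrFun (eq_of_mul_sub_one_eq (chain_mul_chain_sub_one _ _) T'_mul_sub_one rfl) n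
  · exact (congrArg phi (psi_S' j)).trans (phi_S j)

theorem G_iso_G' : Nonempty (PresentedGroup relsG ≃* PresentedGroup relsG') :=
  ⟨phi.toMulEquiv psi psi_comp_phi phi_comp_psi⟩

end EllipticD4
end

section
/- In the group G'(D̃₄^{(1,1)}), for every j ∈ {1,2,3,4} the relation t₁ t₀ sⱼ t₁ t₀ sⱼ = sⱼ t₁ t₀ sⱼ t₁ t₀ holds (i.e. relation (P3) of the elliptic Dynkin presentation holds in G'). -/
/-!
STATEMENT 2: In `G'(D̃₄^{(1,1)})`, the relation
`t₁ t₀ sⱼ t₁ t₀ sⱼ = sⱼ t₁ t₀ sⱼ t₁ t₀` holds for every `j ∈ {1,2,3,4}`.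
-/

namespace EllipticD4

/-- The image of the generator `tᵢ` in `G'(D̃₄^{(1,1)})`. -/
def t (i : ℤ) : PresentedGroup relsG' := PresentedGroup.of (Sum.inl i)

/-- The image of the generator `sⱼ` in `G'(D̃₄^{(1,1)})`. -/
def s (j : Fin 4) : PresentedGroup relsG' := PresentedGroup.of (Sum.inr j)

/-- `c = b * d` also factors as `a * b`; switching between the two factorizations lets each
letter of `c` be pushed past `x` by its own braid relation. -/
theorem mul_braid_of_intertwine {G : Type*} [Group G] {a b d x : G} (hab : a * b = b * d)
    (ha : a * x * a = x * a * x) (hb : b * x * b = x * b * x) (hd : d * x * d = x * d * x) :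
    b * d * x * b * d * x = x * b * d * x * b * d :=
  calc b * d * x * b * d * x
      = a * b * x * b * (d * x) := by rw [hab]; group
    _ = a * (x * b * x) * (d * x) := by rw [← hb]; group
    _ = a * x * b * (d * x * d) := by rw [hd]; group
    _ = a * x * (a * b) * (x * d) := by rw [hab]; group
    _ = x * a * x * (b * (x * d)) := by rw [← ha]; group
    _ = x * a * (b * x * b) * d := by rw [hb]; group
    _ = x * (b * d) * x * b * d := by rw [← hab]; group
    _ = x * b * d * x * b * d := by group

theorem t_mul_s_mul_t (i : ℤ) (j : Fin 4) : t i * s j * t i = s j * t i * s j :=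
  PresentedGroup.mk_eq_mk_of_inv_mul_mem (Or.inl ⟨i, j, rfl⟩)

theorem t_mul_t_sub_one (i k : ℤ) : t i * t (i - 1) = t k * t (k - 1) :=
  PresentedGroup.mk_eq_mk_of_inv_mul_mem (Or.inr (Or.inr ⟨i, k, rfl⟩))

theorem P3_holds_in_G' (j : Fin 4) :
    t 1 * t 0 * s j * t 1 * t 0 * s j = s j * t 1 * t 0 * s j * t 1 * t 0 :=
  mul_braid_of_intertwine (a := t 2) (t_mul_t_sub_one 2 1)
    (t_mul_s_mul_t 2 j) (t_mul_s_mul_t 1 j) (t_mul_s_mul_t 0 j)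

end EllipticD4
end
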